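/- Let $r \geq 7$ with $r \equiv 3 \pmod 4$ and $q = e^{2\pi i/r}$. Then the quantum 6j-symbol $\left|\begin{smallmatrix} (r-3)/2 & (r-3)/4 & (r-3)/4 \\ (r-3)/2 & (r-3)/4 & (r-3)/4 \end{smallmatrix}\right|$ is a positive real number; explicitly, it equals $\Delta\!\left(\tfrac{r-3}{2}, \tfrac{r-3}{4}, \tfrac{r-3}{4}\right)^4 \cdot \dfrac{(-1)^{(r-3)/2}\,[\tfrac{r-3}{2}+1]!}{[\tfrac{r-3}{4}]!^2} > 0$. -/

import Mathlib

open scoped Real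
open Complex Finset

noncomputable section

/-- The quantum integer `[n]` at `q = exp(2πi/r)`. -/
def qint (r : ℕ) (n : ℤ) : ℂ :=
  (Complex.exp (2 * Real.pi * Complex.I / r) ^ n -
    Complex.exp (2 * Real.pi * Complex.I / r) ^ (-n)) /
  (Complex.exp (2 * Real.pi * Complex.I / r) -
    (Complex.exp (2 * Real.pi * Complex.I / r))⁻¹)

/-- The quantum factorial `[N]! = ∏_{k=1}^N [k]`, with `[0]! = 1`. -/
def qfact (r N : ℕ) : ℂ := ∏ k ∈ Finset.Icc 1 N, qint r (k : ℤ)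

/-- A triple `(a₁,a₂,a₃)` of elements of `I_r = {0,…,r-2}` is `r`-admissible. -/
def AdmissibleTriple (r a₁ a₂ a₃ : ℕ) : Prop :=
  a₁ ≤ r - 2 ∧ a₂ ≤ r - 2 ∧ a₃ ≤ r - 2 ∧
  Even (a₁ + a₂ + a₃) ∧
  a₁ + a₂ + a₃ ≤ 2 * (r - 2) ∧
  a₃ ≤ a₁ + a₂ ∧ a₂ ≤ a₁ + a₃ ∧ a₁ ≤ a₂ + a₃

/-- A 6-tuple `(a₁,…,a₆)` is `r`-admissible. -/
def Admissible6 (r a₁ a₂ a₃ a₄ a₅ a₆ : ℕ) : Prop :=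
  AdmissibleTriple r a₁ a₂ a₃ ∧ AdmissibleTriple r a₁ a₅ a₆ ∧
  AdmissibleTriple r a₂ a₄ a₆ ∧ AdmissibleTriple r a₃ a₄ a₅

/-- `Δ(a₁,a₂,a₃)`, using the principal complex square root, which realizes the
convention `√y = i√|y|` for negative real `y`. -/
def qdelta (r a₁ a₂ a₃ : ℕ) : ℂ :=
  (qfact r ((a₁ + a₂ - a₃) / 2) * qfact r ((a₁ + a₃ - a₂) / 2) *
      qfact r ((a₂ + a₃ - a₁) / 2) / qfact r ((a₁ + a₂ + a₃) / 2 + 1)) ^ (1 / 2 : ℂ)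

/-- The quantum 6j-symbol `|a₁ a₂ a₃; a₄ a₅ a₆|` at `q = exp(2πi/r)`. -/
def sixj (r a₁ a₂ a₃ a₄ a₅ a₆ : ℕ) : ℂ :=
  Complex.I ^ (-(a₁ + a₂ + a₃ + a₄ + a₅ + a₆ : ℤ)) *
    qdelta r a₁ a₂ a₃ * qdelta r a₁ a₅ a₆ * qdelta r a₂ a₄ a₆ * qdelta r a₃ a₄ a₅ *
    ∑ k ∈ Finset.Icc
        (max (max ((a₁ + a₂ + a₃) / 2) ((a₁ + a₅ + a₆) / 2))
             (max ((a₂ + a₄ + a₆) / 2) ((a₃ + a₄ + a₅) / 2)))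
        (min ((a₁ + a₂ + a₄ + a₅) / 2)
             (min ((a₁ + a₃ + a₄ + a₆) / 2) ((a₂ + a₃ + a₅ + a₆) / 2))),
      ((-1 : ℂ) ^ k * qfact r (k + 1)) /
        (qfact r (k - (a₁ + a₂ + a₃) / 2) * qfact r (k - (a₁ + a₅ + a₆) / 2) *
         qfact r (k - (a₂ + a₄ + a₆) / 2) * qfact r (k - (a₃ + a₄ + a₅) / 2) *
         qfact r ((a₁ + a₂ + a₄ + a₅) / 2 - k) * qfact r ((a₁ + a₃ + a₄ + a₆) / 2 - k) *
         qfact r ((a₂ + a₃ + a₅ + a₆) / 2 - k))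

/-- `n_r = (r-1)/2` if `r ≡ 1 mod 4`, and `n_r = (r-3)/2` if `r ≡ 3 mod 4`. -/
def nr (r : ℕ) : ℕ := if r % 4 = 1 then (r - 1) / 2 else (r - 3) / 2


/-!
At `q = exp(iθ)`, `θ = 2π/r`, the quantum integer `[k]` is the real number `sin(kθ) / sin θ`,
which is positive for `0 < 2k < r`. Writing `r = 4m + 3`, the 6-tuple is `(2m, m, m, 2m, m, m)`;
all four Δ's coincide with `Δ = ([m]!² / [2m+1]!)^{1/2}`, so `Δ⁴ = ([m]!² / [2m+1]!)²` whatever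
branch of the square root is taken, and the single-term sum equals `[2m+1]! / [m]!²`. Hence the
6j-symbol is `[m]!² / [2m+1]!`, a positive real number because `2(2m+1) < r`.
-/
lemma sin_two_pi_mul_div_pos {r j : ℕ} (hj : 0 < j) (hjr : 2 * j < r) :
    0 < Real.sin (2 * π * j / r) := by
  have hr : (0 : ℝ) < r := by exact_mod_cast (show 0 < r by omega)
  have hjr' : (2 * j : ℝ) < r := by exact_mod_cast hjr
  apply Real.sin_pos_of_pos_of_lt_pi
  · positivity
  · rw [div_lt_iff₀ hr]
    nlinarith [Real.pi_pos]

lemma exp_mul_I_zpow_sub_zpow_neg (θ : ℝ) (k : ℤ) :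
    Complex.exp (θ * I) ^ k - Complex.exp (θ * I) ^ (-k) = 2 * I * Real.sin (k * θ) := by
  rw [← Complex.exp_int_mul, ← Complex.exp_int_mul, Int.cast_neg, neg_mul, ← mul_assoc,
    ← neg_mul, Complex.exp_mul_I, Complex.exp_mul_I, Complex.cos_neg, Complex.sin_neg,
    Complex.ofReal_sin]
  push_cast
  ring

lemma qint_eq_sin_div_sin (r : ℕ) (n : ℤ) :
    qint r n = ((Real.sin (2 * π * n / r) / Real.sin (2 * π / r) : ℝ) : ℂ) := by
  have hθ : (2 * π * I / r : ℂ) = ((2 * π / r : ℝ) : ℂ) * I := by push_cast; ring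
  have h1 := exp_mul_I_zpow_sub_zpow_neg (2 * π / r) 1
  rw [zpow_one, zpow_neg_one, Int.cast_one, one_mul] at h1
  rw [qint, hθ, exp_mul_I_zpow_sub_zpow_neg, h1, mul_div_mul_left _ _ (by simp),
    show (n : ℝ) * (2 * π / r) = 2 * π * n / r by ring, ofReal_div]

def qfactReal (r N : ℕ) : ℝ :=
  ∏ k ∈ Icc 1 N, Real.sin (2 * π * k / r) / Real.sin (2 * π / r)

lemma ofReal_qfactReal (r N : ℕ) : (qfactReal r N : ℂ) = qfact r N := by
  simp only [qfactReal, qfact, ofReal_prod, qint_eq_sin_div_sin, Int.cast_natCast]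

lemma qfactReal_pos {r N : ℕ} (hN : 2 * N < r) : 0 < qfactReal r N :=
  prod_pos fun k hk => by
    rw [mem_Icc] at hk
    have h1 := sin_two_pi_mul_div_pos (r := r) one_pos (by omega)
    rw [Nat.cast_one, mul_one] at h1
    exact div_pos (sin_two_pi_mul_div_pos hk.1 (by omega)) h1

lemma qfact_zero (r : ℕ) : qfact r 0 = 1 := by
  simp [qfact]

lemma qdelta_comm (r a₁ a₂ a₃ : ℕ) : qdelta r a₁ a₂ a₃ = qdelta r a₂ a₁ a₃ := by
  simp only [qdelta, add_comm a₁ a₂, mul_right_comm (qfact r ((a₂ + a₁ - a₃) / 2))]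

lemma qdelta_two_mul_self_self (r m : ℕ) :
    qdelta r (2 * m) m m = (qfact r m ^ 2 / qfact r (2 * m + 1)) ^ (1 / 2 : ℂ) := by
  rw [qdelta, show (2 * m + m - m) / 2 = m by omega, show (m + m - 2 * m) / 2 = 0 by omega,
    show (2 * m + m + m) / 2 = 2 * m by omega, qfact_zero, mul_one, sq]

lemma qdelta_two_mul_self_self_pow_four (r m : ℕ) :
    qdelta r (2 * m) m m ^ 4 = (qfact r m ^ 2 / qfact r (2 * m + 1)) ^ 2 := by
  rw [qdelta_two_mul_self_self, one_div, show 4 = 2 * 2 by rfl, pow_mul,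
    cpow_ofNat_inv_pow]

lemma sixj_two_mul_self_self (r m : ℕ) :
    sixj r (2 * m) m m (2 * m) m m =
      qdelta r (2 * m) m m ^ 4 *
        (((-1 : ℂ) ^ (2 * m) * qfact r (2 * m + 1)) / qfact r m ^ 2) := by
  have hI : I ^ (-((2 * m : ℕ) + m + m + (2 * m : ℕ) + m + m : ℤ)) = 1 := by
    rw [show (-((2 * m : ℕ) + m + m + (2 * m : ℕ) + m + m : ℤ)) = 4 * (-2 * m : ℤ) by
        push_cast; ring, zpow_mul, show I ^ (4 : ℤ) = 1 from I_pow_four, one_zpow]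
  rw [sixj, qdelta_comm r m (2 * m) m, hI,
    show (2 * m + m + m) / 2 = 2 * m by omega, show (m + 2 * m + m) / 2 = 2 * m by omega,
    show (2 * m + m + 2 * m + m) / 2 = 3 * m by omega, show (m + m + m + m) / 2 = 2 * m by omega,
    show max (max (2 * m) (2 * m)) (max (2 * m) (2 * m)) = 2 * m by omega,
    show min (3 * m) (min (3 * m) (2 * m)) = 2 * m by omega,
    Icc_self, sum_singleton, Nat.sub_self, show 3 * m - 2 * m = m by omega, qfact_zero]
  ring

lemma sixj_two_mul_self_self_eq_ofReal {r m : ℕ} (hm : 4 * m + 2 < r) :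
    sixj r (2 * m) m m (2 * m) m m =
      ((qfactReal r m ^ 2 / qfactReal r (2 * m + 1) : ℝ) : ℂ) := by
  have hA := (qfactReal_pos (r := r) (N := m) (by omega)).ne'
  have hB := (qfactReal_pos (r := r) (N := 2 * m + 1) (by omega)).ne'
  rw [sixj_two_mul_self_self, qdelta_two_mul_self_self_pow_four, pow_mul, neg_one_sq, one_pow,
    ← ofReal_qfactReal, ← ofReal_qfactReal]
  push_cast
  field_simp

theorem special_case_low_general (r : ℕ) (hmod : r % 4 = 3) :
    sixj r ((r - 3) / 2) ((r - 3) / 4) ((r - 3) / 4) ((r - 3) / 2) ((r - 3) / 4) ((r - 3) / 4) =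
      qdelta r ((r - 3) / 2) ((r - 3) / 4) ((r - 3) / 4) ^ 4 *
        (((-1 : ℂ) ^ ((r - 3) / 2) * qfact r ((r - 3) / 2 + 1)) / qfact r ((r - 3) / 4) ^ 2) ∧
    (sixj r ((r - 3) / 2) ((r - 3) / 4) ((r - 3) / 4) ((r - 3) / 2) ((r - 3) / 4) ((r - 3) / 4)).im
      = 0 ∧
    0 < (sixj r ((r - 3) / 2) ((r - 3) / 4) ((r - 3) / 4)
          ((r - 3) / 2) ((r - 3) / 4) ((r - 3) / 4)).re := by
  obtain ⟨m, rfl⟩ : ∃ m, r = 4 * m + 3 := ⟨(r - 3) / 4, by omega⟩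
  rw [show (4 * m + 3 - 3) / 2 = 2 * m by omega, show (4 * m + 3 - 3) / 4 = m by omega]
  have hval := sixj_two_mul_self_self_eq_ofReal (r := 4 * m + 3) (m := m) (by omega)
  refine ⟨sixj_two_mul_self_self _ _, by rw [hval, ofReal_im], ?_⟩
  rw [hval, ofReal_re]
  have hA := qfactReal_pos (r := 4 * m + 3) (N := m) (by omega)
  have hB := qfactReal_pos (r := 4 * m + 3) (N := 2 * m + 1) (by omega)
  positivity

theorem special_case_low (r : ℕ) (hr : 7 ≤ r) (hmod : r % 4 = 3) :
    sixj r ((r - 3) / 2) ((r - 3) / 4) ((r - 3) / 4) ((r - 3) / 2) ((r - 3) / 4) ((r - 3) / 4) =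
      qdelta r ((r - 3) / 2) ((r - 3) / 4) ((r - 3) / 4) ^ 4 *
        (((-1 : ℂ) ^ ((r - 3) / 2) * qfact r ((r - 3) / 2 + 1)) / qfact r ((r - 3) / 4) ^ 2) ∧
    (sixj r ((r - 3) / 2) ((r - 3) / 4) ((r - 3) / 4) ((r - 3) / 2) ((r - 3) / 4) ((r - 3) / 4)).im
      = 0 ∧
    0 < (sixj r ((r - 3) / 2) ((r - 3) / 4) ((r - 3) / 4)
          ((r - 3) / 2) ((r - 3) / 4) ((r - 3) / 4)).re :=
  special_case_low_general r hmod
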